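/- arXiv:math/9506203 — 2 statements merged into one kernel-verified Lean document; each statement's English description precedes it below -/
import Mathlib

section
/- Every first integral H of the vector field v(x,y) = (y, x^2) that is a formal power series satisfies dH(0) = 0; i.e., v has no non-singular formal integral. -/
/-! Comparing the coefficients of `y` and of `x²` in `y·H_x + x²·H_y = 0` gives
`H_x(0) = 0` and `H_y(0) = 0`: the only contribution to the coefficient of `y` is the
constant term of `H_x`, and the only one to that of `x²` is the constant term of `H_y`. -/

open MvPowerSeries

/-- Formal partial derivative of a formal power series in two variables,
with respect to the i-th variable. -/
noncomputable def formalPDeriv (i : Fin 2) (H : MvPowerSeries (Fin 2) ℝ) :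
    MvPowerSeries (Fin 2) ℝ :=
  fun d => ((d i : ℝ) + 1) * coeff (d + Finsupp.single i 1) H

section

variable {σ R : Type*} [Semiring R] (φ : MvPowerSeries σ R) (i : σ) (k : ℕ)

theorem MvPowerSeries.coeff_single_X_pow_mul :
    coeff (Finsupp.single i k) (X i ^ k * φ) = coeff 0 φ := by
  rw [X_pow_eq, coeff_monomial_mul, if_pos le_rfl, one_mul, tsub_self]

theorem MvPowerSeries.coeff_X_pow_mul_of_lt {d : σ →₀ ℕ} (h : d i < k) :
    coeff d (X i ^ k * φ) = 0 := by
  rw [X_pow_eq, coeff_monomial_mul, if_neg]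
  exact fun hle => (hle i).not_gt (by simpa using h)

end

theorem coeff_zero_formalPDeriv (i : Fin 2) (H : MvPowerSeries (Fin 2) ℝ) :
    coeff 0 (formalPDeriv i H) = coeff (Finsupp.single i 1) H := by
  simp [formalPDeriv, coeff_apply]

/-- Every formal integral H of v(x,y) = (y, x²), i.e. every H with
y·H_x + x²·H_y = 0, has vanishing linear part: dH(0) = 0.  Hence v has no
non-singular formal integral.  (Variable 0 is x, variable 1 is y.) -/
theorem no_nonsingular_formal_integral (H : MvPowerSeries (Fin 2) ℝ)
    (hint : X 1 * formalPDeriv 0 H + (X 0) ^ 2 * formalPDeriv 1 H = 0) :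
    coeff (Finsupp.single 0 1) H = 0 ∧ coeff (Finsupp.single 1 1) H = 0 := by
  have hcoeff (d : Fin 2 →₀ ℕ) :
      coeff d (X 1 ^ 1 * formalPDeriv 0 H) + coeff d (X 0 ^ 2 * formalPDeriv 1 H) = 0 := by
    rw [pow_one, ← map_add, hint, map_zero]
  constructor
  · have hy := hcoeff (Finsupp.single 1 1)
    rwa [coeff_single_X_pow_mul, coeff_X_pow_mul_of_lt _ _ _ (by simp), add_zero,
      coeff_zero_formalPDeriv] at hy
  · have hx2 := hcoeff (Finsupp.single 0 2)
    rwa [coeff_single_X_pow_mul, coeff_X_pow_mul_of_lt _ _ _ (by simp), zero_add,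
      coeff_zero_formalPDeriv] at hx2
end

section
/- If formal power series μ(t), ν(t), a(t), b(t) with nonnegative coefficients satisfy μ ≺ ν + 2aμ + b and ν ≺ b/(1-a), with a(0) = 0, then μ ≺ 2b/(1-2a)^2. -/
/-!
Put `A = 2a` and `Z = (1 - A)⁻¹ = 1 + A Z`. Since `A` has nonnegative coefficients and no
constant term, the `n`-th coefficient of `A p` only involves coefficients of `p` below `n`, so
`p ≺ c + A p` forces `p ≺ q` for every `q` with `c + A q ≺ q` (strong induction on `n`).
The hypotheses give `μ ≺ (ν + b) + A μ` and `ν + b ≺ b/(1-a) + b ≺ 2bZ`, while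
`M = 2bZ²` satisfies `M = 2bZ + A M`; hence `μ ≺ M`.
-/

namespace PowerSeries

def CoeffLE {R : Type*} [Semiring R] [LE R] (p q : R⟦X⟧) : Prop :=
  ∀ n, coeff n p ≤ coeff n q

scoped infix:50 " ≺ " => CoeffLE

section Preorder

variable {R : Type*} [Semiring R] [Preorder R] {p q r : R⟦X⟧}

theorem CoeffLE.of_eq (h : p = q) : p ≺ q := fun _ => (congrArg (coeff _) h).le

theorem CoeffLE.trans (hpq : p ≺ q) (hqr : q ≺ r) : p ≺ r := fun n => (hpq n).trans (hqr n)

end Preorder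

section OrderedSemiring

variable {R : Type*} [Semiring R] [PartialOrder R] [IsOrderedRing R] {A c p q r : R⟦X⟧}

theorem zero_coeffLE_one : (0 : R⟦X⟧) ≺ 1 := fun n => by
  simp only [map_zero, coeff_one]
  split_ifs <;> simp

theorem CoeffLE.add {p' q' : R⟦X⟧} (h : p ≺ q) (h' : p' ≺ q') : p + p' ≺ q + q' := by
  intro n
  simpa only [map_add] using add_le_add (h n) (h' n)

theorem coeffLE_add_of_nonneg_right (hq : 0 ≺ q) : p ≺ p + q := fun n => by
  simpa only [map_add] using le_add_of_nonneg_right (by simpa using hq n)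

theorem CoeffLE.mul_left (h : p ≺ q) (hr : 0 ≺ r) : r * p ≺ r * q := by
  intro n
  simp only [coeff_mul]
  exact Finset.sum_le_sum fun ij _ => mul_le_mul_of_nonneg_left (h _) (by simpa using hr ij.1)

theorem CoeffLE.mul_right (h : p ≺ q) (hr : 0 ≺ r) : p * r ≺ q * r := by
  intro n
  simp only [coeff_mul]
  exact Finset.sum_le_sum fun ij _ => mul_le_mul_of_nonneg_right (h _) (by simpa using hr ij.2)

theorem coeff_mul_le_coeff_mul_of_forall_lt (hA : 0 ≺ A) (hA0 : constantCoeff A = 0) {n : ℕ}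
    (h : ∀ j < n, coeff j p ≤ coeff j q) : coeff n (A * p) ≤ coeff n (A * q) := by
  simp only [coeff_mul]
  refine Finset.sum_le_sum fun ij hij => ?_
  rcases Nat.eq_zero_or_pos ij.1 with h0 | hpos
  · simp [h0, coeff_zero_eq_constantCoeff_apply, hA0]
  · have hlt : ij.2 < n := by
      have := Finset.HasAntidiagonal.mem_antidiagonal.mp hij
      omega
    exact mul_le_mul_of_nonneg_left (h _ hlt) (by simpa using hA ij.1)

/-- Comparison principle: a subsolution of `p = c + A p` lies below any supersolution. -/
theorem coeffLE_of_le_add_mul (hA : 0 ≺ A) (hA0 : constantCoeff A = 0)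
    (hp : p ≺ c + A * p) (hq : c + A * q ≺ q) : p ≺ q := by
  intro n
  induction n using Nat.strong_induction_on with
  | _ n ih =>
    calc coeff n p ≤ coeff n c + coeff n (A * p) := by simpa only [map_add] using hp n
      _ ≤ coeff n c + coeff n (A * q) := by
        gcongr
        exact coeff_mul_le_coeff_mul_of_forall_lt hA hA0 ih
      _ ≤ coeff n q := by simpa only [map_add] using hq n

end OrderedSemiring

section OrderedField

variable {K : Type*} [Field K] [PartialOrder K] [IsOrderedRing K] {a A : K⟦X⟧}

theorem inv_one_sub_eq_one_add_mul (hA0 : constantCoeff A = 0) :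
    (1 - A)⁻¹ = 1 + A * (1 - A)⁻¹ := by
  have h := PowerSeries.mul_inv_cancel (1 - A) (by simp [hA0])
  linear_combination h

theorem one_coeffLE_inv_one_sub (hA : 0 ≺ A) (hA0 : constantCoeff A = 0) : 1 ≺ (1 - A)⁻¹ := by
  have hp : (1 : K⟦X⟧) ≺ 1 + A * 1 := by
    simpa only [mul_one] using coeffLE_add_of_nonneg_right hA
  exact coeffLE_of_le_add_mul hA hA0 hp (.of_eq (inv_one_sub_eq_one_add_mul hA0).symm)

theorem zero_coeffLE_inv_one_sub (hA : 0 ≺ A) (hA0 : constantCoeff A = 0) : 0 ≺ (1 - A)⁻¹ :=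
  zero_coeffLE_one.trans (one_coeffLE_inv_one_sub hA hA0)

theorem inv_one_sub_coeffLE_inv_one_sub (ha : 0 ≺ a) (ha0 : constantCoeff a = 0)
    (hA : 0 ≺ A) (hA0 : constantCoeff A = 0) (haA : a ≺ A) : (1 - a)⁻¹ ≺ (1 - A)⁻¹ := by
  have hp : (1 - a)⁻¹ ≺ 1 + A * (1 - a)⁻¹ :=
    (CoeffLE.of_eq (inv_one_sub_eq_one_add_mul ha0)).trans
      ((CoeffLE.of_eq rfl).add (haA.mul_right (zero_coeffLE_inv_one_sub ha ha0)))
  exact coeffLE_of_le_add_mul hA hA0 hp (.of_eq (inv_one_sub_eq_one_add_mul hA0).symm)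

end OrderedField

end PowerSeries

open PowerSeries

theorem majorant_u_estimate_general (μ ν a b : PowerSeries ℝ)
    (ha : ∀ n, 0 ≤ coeff n a) (hb : ∀ n, 0 ≤ coeff n b)
    (ha0 : PowerSeries.constantCoeff a = 0)
    (hdomμ : ∀ n, coeff n μ ≤ coeff n (ν + 2 * a * μ + b))
    (hdomν : ∀ n, coeff n ν ≤ coeff n (b * (1 - a)⁻¹)) :
    ∀ n, coeff n μ ≤ coeff n (2 * b * ((1 - 2 * a)⁻¹) ^ 2) := by
  have ha : 0 ≺ a := fun n => by simpa using ha n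
  have hb : 0 ≺ b := fun n => by simpa using hb n
  have hν : ν ≺ b * (1 - a)⁻¹ := hdomν
  have hA : 0 ≺ 2 * a := by simpa only [two_mul, add_zero] using ha.add ha
  have hA0 : constantCoeff (2 * a) = 0 := by simp [ha0]
  have haA : a ≺ 2 * a := by simpa only [two_mul] using coeffLE_add_of_nonneg_right ha
  have hW : (1 - a)⁻¹ ≺ (1 - 2 * a)⁻¹ := inv_one_sub_coeffLE_inv_one_sub ha ha0 hA hA0 haA
  have hνb : ν + b ≺ 2 * b * (1 - 2 * a)⁻¹ := by
    have hb' : b ≺ b * (1 - 2 * a)⁻¹ := by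
      simpa only [mul_one] using (one_coeffLE_inv_one_sub hA hA0).mul_left hb
    have h := (hν.trans (hW.mul_left hb)).add hb'
    rwa [← two_mul, ← mul_assoc] at h
  have hμ : μ ≺ 2 * b * (1 - 2 * a)⁻¹ + 2 * a * μ := by
    have h : μ ≺ ν + b + 2 * a * μ := by
      rw [show ν + b + 2 * a * μ = ν + 2 * a * μ + b by ring]
      exact hdomμ
    exact h.trans (hνb.add (.of_eq rfl))
  refine coeffLE_of_le_add_mul hA hA0 hμ (.of_eq ?_)
  linear_combination -(2 * b * (1 - 2 * a)⁻¹) * inv_one_sub_eq_one_add_mul hA0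

/-- If μ ≺ ν + 2aμ + b and ν ≺ b/(1-a), with nonnegative coefficients and a(0)=0,
then μ ≺ 2b/(1-2a)^2. -/
theorem majorant_u_estimate (μ ν a b : PowerSeries ℝ)
    (hμ : ∀ n, 0 ≤ coeff n μ) (hν : ∀ n, 0 ≤ coeff n ν)
    (ha : ∀ n, 0 ≤ coeff n a) (hb : ∀ n, 0 ≤ coeff n b)
    (ha0 : PowerSeries.constantCoeff a = 0)
    (hdomμ : ∀ n, coeff n μ ≤ coeff n (ν + 2 * a * μ + b))
    (hdomν : ∀ n, coeff n ν ≤ coeff n (b * (1 - a)⁻¹)) :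
    ∀ n, coeff n μ ≤ coeff n (2 * b * ((1 - 2 * a)⁻¹) ^ 2) :=
  majorant_u_estimate_general μ ν a b ha hb ha0 hdomμ hdomν
end
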